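/- Let $1 \le \mathfrak{p}_- < \mathfrak{p}_+ \le \infty$ and $p \in (\mathfrak{p}_-, \mathfrak{p}_+)$, and set $\tau_p = (\mathfrak{p}_+/p)'(p/\mathfrak{p}_- - 1) + 1$. Then $w^p \in A_{p/\mathfrak{p}_-} \cap RH_{(\mathfrak{p}_+/p)'}$ if and only if $w^{-p'} \in A_{p'/\mathfrak{p}_+'} \cap RH_{(\mathfrak{p}_-'/p')'}$, and moreover $[w^{p(\mathfrak{p}_+/p)'}]_{A_{\tau_p}} = [w^{-p'(\mathfrak{p}_-'/p')'}]_{A_{\tau_p'}}^{\tau_p - 1}$. -/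

import Mathlib

open MeasureTheory ENNReal

noncomputable section

/-- A (closed, axis-parallel) cube in `ℝⁿ`. -/
def IsCube {n : ℕ} (Q : Set (Fin n → ℝ)) : Prop :=
  ∃ (c : Fin n → ℝ) (r : ℝ), 0 < r ∧ Q = {x | ∀ i, |x i - c i| ≤ r}

/-- Average `⨍_Q w` of an `ℝ≥0∞`-valued function over a set. -/
def avgE {n : ℕ} (Q : Set (Fin n → ℝ)) (w : (Fin n → ℝ) → ℝ≥0∞) : ℝ≥0∞ :=
  (∫⁻ x in Q, w x) / volume Q

/-- The `A_p` constant, `1 < p < ∞`. -/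
def apSup {n : ℕ} (p : ℝ) (w : (Fin n → ℝ) → ℝ≥0∞) : ℝ≥0∞ :=
  ⨆ (Q : Set (Fin n → ℝ)) (_ : IsCube Q),
    avgE Q w * (avgE Q fun x => w x ^ (-(1 / (p - 1)))) ^ (p - 1)

/-- The `A_1` constant. -/
def a1Const {n : ℕ} (w : (Fin n → ℝ) → ℝ≥0∞) : ℝ≥0∞ :=
  ⨆ (Q : Set (Fin n → ℝ)) (_ : IsCube Q),
    avgE Q w * essSup (fun x => (w x)⁻¹) (volume.restrict Q)

/-- The Muckenhoupt `A_p` constant for `1 ≤ p < ∞`. -/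
def apConst {n : ℕ} (p : ℝ) (w : (Fin n → ℝ) → ℝ≥0∞) : ℝ≥0∞ :=
  if p = 1 then a1Const w else apSup p w

/-- The `A_∞` constant, `[w]_{A_∞} = inf_{p>1} [w]_{A_p}`. -/
def aInftyConst {n : ℕ} (w : (Fin n → ℝ) → ℝ≥0∞) : ℝ≥0∞ :=
  ⨅ (p : ℝ) (_ : 1 < p), apConst p w

/-- The reverse Hölder constant, `1 ≤ s < ∞`. -/
def rhConst {n : ℕ} (s : ℝ) (w : (Fin n → ℝ) → ℝ≥0∞) : ℝ≥0∞ :=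
  ⨆ (Q : Set (Fin n → ℝ)) (_ : IsCube Q),
    (avgE Q fun x => w x ^ s) ^ (1 / s) / avgE Q w

/-- The reverse Hölder constant for an exponent `s ∈ [1,∞]`. -/
def rhConstE {n : ℕ} (s : ℝ≥0∞) (w : (Fin n → ℝ) → ℝ≥0∞) : ℝ≥0∞ :=
  if s = ∞ then
    ⨆ (Q : Set (Fin n → ℝ)) (_ : IsCube Q),
      essSup w (volume.restrict Q) / avgE Q w
  else rhConst s.toReal w

/-- A weight on `ℝⁿ`: measurable, positive and finite a.e. -/
def IsWeight {n : ℕ} (w : (Fin n → ℝ) → ℝ≥0∞) : Prop :=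
  Measurable w ∧ ∀ᵐ x ∂(volume : Measure (Fin n → ℝ)), 0 < w x ∧ w x < ∞

/-- The conjugate exponent `p' = p/(p-1)` of a real exponent. -/
def rconj (p : ℝ) : ℝ := p / (p - 1)

/-- The conjugate exponent of an extended-real exponent, with `1' = ∞`, `∞' = 1`. -/
def econj (p : ℝ≥0∞) : ℝ≥0∞ :=
  if p = ∞ then 1 else if p ≤ 1 then ∞ else ENNReal.ofReal (p.toReal / (p.toReal - 1))

/-- The limited-range exponent `τ_p = (𝔭₊/p)'(p/𝔭₋ - 1) + 1`. -/
def tauExp (pm : ℝ) (pp : ℝ≥0∞) (p : ℝ) : ℝ :=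
  (econj (pp / ENNReal.ofReal p)).toReal * (p / pm - 1) + 1

/-!
Johnson–Neugebauer: `W ∈ A_q ∩ RH_s` iff `W^s ∈ A_{s(q-1)+1}`. On each cube the
`A_{s(q-1)+1}` quantity of `W^s`, raised to `1/s`, is `(⨍W^s)^{1/s} (⨍W^{-1/(q-1)})^{q-1}`; this
is at most the product of the `RH_s` and `A_q` quantities of `W`, and at least each of them, by
Jensen (`⨍W ≤ (⨍W^s)^{1/s}`) and Hölder (`1 ≤ ⨍W (⨍W^{-1/(q-1)})^{q-1}`).

With `q = p/𝔭₋`, `s = (𝔭₊/p)'` the left-hand condition becomes `v := w^{ps} ∈ A_τ`, and with the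
dual exponents the right-hand one becomes `v^{-1/(τ-1)} ∈ A_{τ'}`. Both the conditions and the
constants are then exchanged by `[v]_{A_τ} = [v^{-1/(τ-1)}]_{A_{τ'}}^{τ-1}`, which holds cube by
cube.
-/

variable {n : ℕ}

lemma IsCube.eq_closedBall {Q : Set (Fin n → ℝ)} (hQ : IsCube Q) :
    ∃ (c : Fin n → ℝ) (r : ℝ), 0 < r ∧ Q = Metric.closedBall c r := by
  obtain ⟨c, r, hr, rfl⟩ := hQ
  refine ⟨c, r, hr, ?_⟩
  ext x
  simp [dist_pi_le_iff hr.le, Real.dist_eq]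

lemma IsCube.volume_ne_zero {Q : Set (Fin n → ℝ)} (hQ : IsCube Q) : volume Q ≠ 0 := by
  obtain ⟨c, r, hr, rfl⟩ := hQ.eq_closedBall
  exact (Metric.measure_closedBall_pos volume c hr).ne'

lemma IsCube.volume_ne_top {Q : Set (Fin n → ℝ)} (hQ : IsCube Q) : volume Q ≠ ∞ := by
  obtain ⟨c, r, -, rfl⟩ := hQ.eq_closedBall
  exact (isCompact_closedBall c r).measure_lt_top.ne

lemma IsWeight.rpow {w : (Fin n → ℝ) → ℝ≥0∞} (hw : IsWeight w) (t : ℝ) :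
    IsWeight fun x => w x ^ t := by
  refine ⟨hw.1.pow_const t, hw.2.mono fun x ⟨h0, htop⟩ => ⟨?_, ?_⟩⟩
  · exact ENNReal.rpow_pos h0 htop.ne
  · exact (ENNReal.rpow_ne_top_of_ne_zero h0.ne' htop.ne).lt_top

section avgE

variable {Q : Set (Fin n → ℝ)}

lemma avgE_congr_ae {f g : (Fin n → ℝ) → ℝ≥0∞} (h : ∀ᵐ x, f x = g x) :
    avgE Q f = avgE Q g := by
  rw [avgE, avgE, lintegral_congr_ae (ae_restrict_of_ae h)]

lemma avgE_one (hQ : IsCube Q) : avgE Q (fun _ => 1) = 1 := by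
  simp [avgE, ENNReal.div_self hQ.volume_ne_zero hQ.volume_ne_top]

lemma avgE_pos (hQ : IsCube Q) {w : (Fin n → ℝ) → ℝ≥0∞} (hw : IsWeight w) : 0 < avgE Q w := by
  refine ENNReal.div_pos (fun h0 => hQ.volume_ne_zero ?_) hQ.volume_ne_top
  rw [lintegral_eq_zero_iff hw.1] at h0
  have hfalse : ∀ᵐ x ∂volume.restrict Q, False := by
    filter_upwards [h0, ae_restrict_of_ae hw.2] with x h1 h2 using h2.1.ne' h1
  exact Measure.restrict_eq_zero.mp (ae_eq_bot.mp (Filter.eventually_false_iff_eq_bot.mp hfalse))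

lemma avgE_mul_le (hQ : IsCube Q) {f g : (Fin n → ℝ) → ℝ≥0∞}
    (hf : AEMeasurable f (volume.restrict Q)) (hg : AEMeasurable g (volume.restrict Q))
    {r r' : ℝ} (hr : r.HolderConjugate r') :
    avgE Q (fun x => f x * g x) ≤
      (avgE Q fun x => f x ^ r) ^ (1 / r) * (avgE Q fun x => g x ^ r') ^ (1 / r') := by
  have hr0 : 0 ≤ 1 / r := one_div_nonneg.2 hr.nonneg
  have hr0' : 0 ≤ 1 / r' := one_div_nonneg.2 hr.symm.nonneg
  have hV : volume Q ^ (1 / r) * volume Q ^ (1 / r') = volume Q := by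
    rw [← ENNReal.rpow_add _ _ hQ.volume_ne_zero hQ.volume_ne_top, one_div, one_div,
      hr.inv_add_inv_eq_one, ENNReal.rpow_one]
  rw [avgE, avgE, avgE, ENNReal.div_rpow_of_nonneg _ _ hr0, ENNReal.div_rpow_of_nonneg _ _ hr0',
    ← ENNReal.mul_div_mul_comm (Or.inr (ENNReal.rpow_ne_top_of_nonneg hr0' hQ.volume_ne_top))
      (Or.inl (ENNReal.rpow_ne_top_of_nonneg hr0 hQ.volume_ne_top)), hV]
  exact ENNReal.div_le_div_right (ENNReal.lintegral_mul_le_Lp_mul_Lq _ hr hf hg) _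

lemma avgE_le_rpow_avgE (hQ : IsCube Q) {w : (Fin n → ℝ) → ℝ≥0∞}
    (hw : AEMeasurable w (volume.restrict Q)) {s : ℝ} (hs : 1 ≤ s) :
    avgE Q w ≤ (avgE Q fun x => w x ^ s) ^ (1 / s) := by
  rcases hs.eq_or_lt with rfl | hs
  · simp
  simpa [avgE_one hQ] using
    avgE_mul_le hQ hw aemeasurable_const (Real.HolderConjugate.conjExponent hs) (g := fun _ => 1)

end avgE

def apTerm (q : ℝ) (w : (Fin n → ℝ) → ℝ≥0∞) (Q : Set (Fin n → ℝ)) : ℝ≥0∞ :=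
  avgE Q w * (avgE Q fun x => w x ^ (-(1 / (q - 1)))) ^ (q - 1)

def rhTerm (s : ℝ) (w : (Fin n → ℝ) → ℝ≥0∞) (Q : Set (Fin n → ℝ)) : ℝ≥0∞ :=
  (avgE Q fun x => w x ^ s) ^ (1 / s) / avgE Q w

lemma apSup_eq_iSup_apTerm (q : ℝ) (w : (Fin n → ℝ) → ℝ≥0∞) :
    apSup q w = ⨆ (Q : Set (Fin n → ℝ)) (_ : IsCube Q), apTerm q w Q := rfl

lemma apTerm_le_apSup {Q : Set (Fin n → ℝ)} (hQ : IsCube Q) (q : ℝ) (w : (Fin n → ℝ) → ℝ≥0∞) :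
    apTerm q w Q ≤ apSup q w :=
  le_iSup₂ (f := fun Q (_ : IsCube Q) => apTerm q w Q) Q hQ

lemma rhTerm_le_rhConst {Q : Set (Fin n → ℝ)} (hQ : IsCube Q) (s : ℝ) (w : (Fin n → ℝ) → ℝ≥0∞) :
    rhTerm s w Q ≤ rhConst s w :=
  le_iSup₂ (f := fun Q (_ : IsCube Q) => rhTerm s w Q) Q hQ

section weights

variable {Q : Set (Fin n → ℝ)} {w : (Fin n → ℝ) → ℝ≥0∞} {q s : ℝ}

lemma one_le_apTerm (hQ : IsCube Q) (hw : IsWeight w) (hq : 1 < q) : 1 ≤ apTerm q w Q := by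
  have hq0 : 0 < q := by linarith
  have hHolder := avgE_mul_le hQ (hw.rpow (1 / q)).1.aemeasurable
    (hw.rpow (-(1 / q))).1.aemeasurable (Real.HolderConjugate.conjExponent hq)
  have hone : avgE Q (fun x => w x ^ (1 / q) * w x ^ (-(1 / q))) = 1 := by
    rw [← avgE_one hQ]
    refine avgE_congr_ae (hw.2.mono fun x hx => ?_)
    rw [← ENNReal.rpow_add _ _ hx.1.ne' hx.2.ne, add_neg_cancel, ENNReal.rpow_zero]
  have hexp₁ : 1 / q * q = 1 := by field_simp
  have hexp₂ : -(1 / q) * q.conjExponent = -(1 / (q - 1)) := by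
    rw [Real.conjExponent]; field_simp
  simp only [← ENNReal.rpow_mul, hone, hexp₁, hexp₂, ENNReal.rpow_one] at hHolder
  calc (1 : ℝ≥0∞) = 1 ^ q := (ENNReal.one_rpow q).symm
    _ ≤ _ := ENNReal.rpow_le_rpow hHolder hq0.le
    _ = apTerm q w Q := by
      rw [apTerm, ENNReal.mul_rpow_of_nonneg _ _ hq0.le, ← ENNReal.rpow_mul, ← ENNReal.rpow_mul,
        Real.conjExponent]
      congr 2
      · rw [one_div_mul_cancel hq0.ne', ENNReal.rpow_one]
      · field_simp

lemma apTerm_rpow_rpow_one_div (hs : 0 < s) :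
    apTerm (s * (q - 1) + 1) (fun x => w x ^ s) Q ^ (1 / s) =
      (avgE Q fun x => w x ^ s) ^ (1 / s) *
        (avgE Q fun x => w x ^ (-(1 / (q - 1)))) ^ (q - 1) := by
  have hexp : s * -(1 / (s * (q - 1))) = -(1 / (q - 1)) := by field_simp
  simp only [apTerm, add_sub_cancel_right, ← ENNReal.rpow_mul, hexp]
  rw [ENNReal.mul_rpow_of_nonneg _ _ (by positivity), ← ENNReal.rpow_mul]
  congr 2
  field_simp

lemma apSup_rpow_le (hw : IsWeight w) (hq : 1 < q) (hs : 0 < s) (hA : apSup q w ≠ ∞) :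
    apSup (s * (q - 1) + 1) (fun x => w x ^ s) ≤ (rhConst s w * apSup q w) ^ s := by
  refine iSup₂_le fun Q hQ => show apTerm _ _ Q ≤ _ from ?_
  rw [← ENNReal.rpow_inv_le_iff hs, ← one_div, apTerm_rpow_rpow_one_div hs]
  have hσ : (avgE Q fun x => w x ^ (-(1 / (q - 1)))) ^ (q - 1) ≠ 0 :=
    (ENNReal.rpow_pos_of_nonneg (avgE_pos hQ (hw.rpow _)) (by linarith)).ne'
  have hAQ : avgE Q w ≠ ∞ := fun htop => hA <| top_le_iff.mp <| by
    calc ⊤ = apTerm q w Q := by rw [apTerm, htop, ENNReal.top_mul hσ]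
      _ ≤ apSup q w := apTerm_le_apSup hQ q w
  have hRH : (avgE Q fun x => w x ^ s) ^ (1 / s) ≤ rhConst s w * avgE Q w :=
    (ENNReal.div_le_iff (avgE_pos hQ hw).ne' hAQ).1 (rhTerm_le_rhConst hQ s w)
  calc _ ≤ rhConst s w * avgE Q w * (avgE Q fun x => w x ^ (-(1 / (q - 1)))) ^ (q - 1) :=
        mul_le_mul_left hRH _
    _ = rhConst s w * apTerm q w Q := by rw [apTerm, mul_assoc]
    _ ≤ rhConst s w * apSup q w := mul_le_mul_right (apTerm_le_apSup hQ q w) _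

lemma apSup_le_apSup_rpow_rpow_one_div (hw : Measurable w) (hs : 1 ≤ s) :
    apSup q w ≤ apSup (s * (q - 1) + 1) (fun x => w x ^ s) ^ (1 / s) := by
  refine iSup₂_le fun Q hQ => ?_
  calc apTerm q w Q
      ≤ (avgE Q fun x => w x ^ s) ^ (1 / s) *
          (avgE Q fun x => w x ^ (-(1 / (q - 1)))) ^ (q - 1) :=
        mul_le_mul_left (avgE_le_rpow_avgE hQ hw.aemeasurable hs) _
    _ = apTerm (s * (q - 1) + 1) (fun x => w x ^ s) Q ^ (1 / s) :=
        (apTerm_rpow_rpow_one_div (by linarith)).symm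
    _ ≤ _ := ENNReal.rpow_le_rpow (apTerm_le_apSup hQ _ _) (by positivity)

lemma rhConst_le_apSup_rpow_rpow_one_div (hw : IsWeight w) (hq : 1 < q) (hs : 0 < s) :
    rhConst s w ≤ apSup (s * (q - 1) + 1) (fun x => w x ^ s) ^ (1 / s) := by
  refine iSup₂_le fun Q hQ => ?_
  have hinv : (avgE Q w)⁻¹ ≤ (avgE Q fun x => w x ^ (-(1 / (q - 1)))) ^ (q - 1) :=
    (ENNReal.inv_le_iff_le_mul (fun _ => (avgE_pos hQ hw).ne')
      (fun _ => (ENNReal.rpow_pos_of_nonneg (avgE_pos hQ (hw.rpow _)) (by linarith)).ne')).2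
      (one_le_apTerm hQ hw hq)
  calc rhTerm s w Q
      = (avgE Q fun x => w x ^ s) ^ (1 / s) * (avgE Q w)⁻¹ := div_eq_mul_inv _ _
    _ ≤ (avgE Q fun x => w x ^ s) ^ (1 / s) *
          (avgE Q fun x => w x ^ (-(1 / (q - 1)))) ^ (q - 1) := mul_le_mul_right hinv _
    _ = apTerm (s * (q - 1) + 1) (fun x => w x ^ s) Q ^ (1 / s) :=
        (apTerm_rpow_rpow_one_div hs).symm
    _ ≤ _ := ENNReal.rpow_le_rpow (apTerm_le_apSup hQ _ _) (by positivity)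

theorem apSup_ne_top_and_rhConst_ne_top_iff (hw : IsWeight w) (hq : 1 < q) (hs : 1 ≤ s) :
    (apSup q w ≠ ∞ ∧ rhConst s w ≠ ∞) ↔ apSup (s * (q - 1) + 1) (fun x => w x ^ s) ≠ ∞ := by
  have hs0 : 0 < s := by linarith
  refine ⟨fun ⟨hA, hR⟩ => ?_, fun hK => ⟨?_, ?_⟩⟩
  · exact ne_top_of_le_ne_top (ENNReal.rpow_ne_top_of_nonneg hs0.le (ENNReal.mul_ne_top hR hA))
      (apSup_rpow_le hw hq hs0 hA)
  · exact ne_top_of_le_ne_top (ENNReal.rpow_ne_top_of_nonneg (by positivity) hK)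
      (apSup_le_apSup_rpow_rpow_one_div hw.1 hs)
  · exact ne_top_of_le_ne_top (ENNReal.rpow_ne_top_of_nonneg (by positivity) hK)
      (rhConst_le_apSup_rpow_rpow_one_div hw hq hs0)

end weights

lemma ENNReal.iSup_rpow {ι : Sort*} (f : ι → ℝ≥0∞) {c : ℝ} (hc : 0 < c) :
    (⨆ i, f i) ^ c = ⨆ i, f i ^ c :=
  (ENNReal.orderIsoRpow c hc).map_iSup f

lemma rconj_sub_one {τ : ℝ} (hτ : 1 < τ) : rconj τ - 1 = 1 / (τ - 1) := by
  have : τ - 1 ≠ 0 := by linarith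
  rw [rconj]
  field_simp
  ring

lemma apTerm_eq_apTerm_rconj_rpow {τ : ℝ} (hτ : 1 < τ) (v : (Fin n → ℝ) → ℝ≥0∞)
    (Q : Set (Fin n → ℝ)) :
    apTerm τ v Q = apTerm (rconj τ) (fun x => v x ^ (-(1 / (τ - 1)))) Q ^ (τ - 1) := by
  have hτ0 : 0 < τ - 1 := by linarith
  have hinv : (fun x => (v x ^ (-(1 / (τ - 1)))) ^ (-(1 / (rconj τ - 1)))) = v := by
    funext x
    rw [← ENNReal.rpow_mul, rconj_sub_one hτ, one_div_one_div,
      show -(1 / (τ - 1)) * -(τ - 1) = 1 by field_simp, ENNReal.rpow_one]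
  rw [apTerm, apTerm, hinv, rconj_sub_one hτ, ENNReal.mul_rpow_of_nonneg _ _ hτ0.le,
    ← ENNReal.rpow_mul, one_div_mul_cancel hτ0.ne', ENNReal.rpow_one, mul_comm]

lemma apSup_eq_apSup_rconj_rpow {τ : ℝ} (hτ : 1 < τ) (v : (Fin n → ℝ) → ℝ≥0∞) :
    apSup τ v = apSup (rconj τ) (fun x => v x ^ (-(1 / (τ - 1)))) ^ (τ - 1) := by
  have hτ0 : 0 < τ - 1 := by linarith
  simp only [apSup_eq_iSup_apTerm, ENNReal.iSup_rpow _ hτ0, apTerm_eq_apTerm_rconj_rpow hτ v]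

lemma apConst_of_one_lt {q : ℝ} (hq : 1 < q) (w : (Fin n → ℝ) → ℝ≥0∞) :
    apConst q w = apSup q w :=
  if_neg hq.ne'

lemma rhConstE_ofReal {s : ℝ} (hs : 0 ≤ s) (w : (Fin n → ℝ) → ℝ≥0∞) :
    rhConstE (ENNReal.ofReal s) w = rhConst s w := by
  rw [rhConstE, if_neg ENNReal.ofReal_ne_top, ENNReal.toReal_ofReal hs]

theorem apConst_rhConstE_duality {w : (Fin n → ℝ) → ℝ≥0∞} (hw : IsWeight w)
    {a b q s q' s' : ℝ} (hq : 1 < q) (hs : 1 ≤ s) (hq' : 1 < q') (hs' : 1 ≤ s')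
    (hrel : s' * (q' - 1) * (s * (q - 1)) = 1) (hexp : b * s' * (q - 1) = a) :
    ((apConst q (fun x => w x ^ a) ≠ ∞ ∧ rhConstE (ENNReal.ofReal s) (fun x => w x ^ a) ≠ ∞) ↔
      (apConst q' (fun x => w x ^ (-b)) ≠ ∞ ∧
        rhConstE (ENNReal.ofReal s') (fun x => w x ^ (-b)) ≠ ∞)) ∧
    apConst (s * (q - 1) + 1) (fun x => w x ^ (a * s)) =
      apConst (rconj (s * (q - 1) + 1)) (fun x => w x ^ (-(b * s'))) ^ (s * (q - 1)) := by
  have hsq : 0 < s * (q - 1) := mul_pos (by linarith) (by linarith)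
  have hτ : 1 < s * (q - 1) + 1 := by linarith
  have hrconj : rconj (s * (q - 1) + 1) = s' * (q' - 1) + 1 := by
    have h := rconj_sub_one hτ
    rw [add_sub_cancel_right, ← eq_one_div_of_mul_eq_one_left hrel] at h
    linarith
  have hdual := apSup_eq_apSup_rconj_rpow hτ fun x => w x ^ (a * s)
  have hexp' : a * s * -(1 / (s * (q - 1))) = -b * s' := by
    have : q - 1 ≠ 0 := by linarith
    have : s ≠ 0 := by linarith
    rw [← hexp]
    field_simp
  simp only [← ENNReal.rpow_mul, add_sub_cancel_right, hexp'] at hdual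
  simp only [apConst_of_one_lt hq, apConst_of_one_lt hq', apConst_of_one_lt hτ,
    hrconj, apConst_of_one_lt (lt_add_of_pos_left 1 (by nlinarith : 0 < s' * (q' - 1))),
    rhConstE_ofReal (by linarith : 0 ≤ s), rhConstE_ofReal (by linarith : 0 ≤ s'),
    apSup_ne_top_and_rhConst_ne_top_iff (hw.rpow a) hq hs,
    apSup_ne_top_and_rhConst_ne_top_iff (hw.rpow (-b)) hq' hs', ← ENNReal.rpow_mul]
  rw [← hrconj, ← neg_mul, hdual]
  exact ⟨by rw [Ne, Ne, ENNReal.rpow_eq_top_iff_of_pos hsq], rfl⟩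

lemma econj_eq_ofReal_inv_one_sub {x : ℝ≥0∞} {a : ℝ} (ha0 : 0 ≤ a) (ha1 : a < 1)
    (hx : x⁻¹ = ENNReal.ofReal a) : econj x = ENNReal.ofReal (1 - a)⁻¹ := by
  rcases ha0.eq_or_lt with rfl | ha
  · rw [ENNReal.ofReal_zero, ENNReal.inv_eq_zero] at hx
    simp [econj, hx]
  have hx' : x = ENNReal.ofReal a⁻¹ := by
    rw [← inv_inv x, hx, ENNReal.ofReal_inv_of_pos ha]
  have ha' : 1 < a⁻¹ := one_lt_inv₀ ha |>.2 ha1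
  rw [econj, hx', if_neg ENNReal.ofReal_ne_top,
    if_neg (not_le.2 (ENNReal.one_lt_ofReal.2 ha')), ENNReal.toReal_ofReal (by positivity)]
  have : 1 - a ≠ 0 := by linarith
  congr 1
  field_simp

lemma inv_econj_ofReal {y : ℝ} (hy : 1 ≤ y) :
    (econj (ENNReal.ofReal y))⁻¹ = ENNReal.ofReal (1 - y⁻¹) := by
  rcases hy.eq_or_lt with rfl | hy
  · simp [econj]
  rw [econj, if_neg ENNReal.ofReal_ne_top, if_neg (not_le.2 (ENNReal.one_lt_ofReal.2 hy)),
    ENNReal.toReal_ofReal (by linarith), ← ENNReal.ofReal_inv_of_pos (by positivity)]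
  have : y - 1 ≠ 0 := by linarith
  congr 1
  field_simp

lemma inv_div_ofReal {x : ℝ≥0∞} {y a : ℝ} (hy : 0 < y) (hx : x⁻¹ = ENNReal.ofReal a) :
    (x / ENNReal.ofReal y)⁻¹ = ENNReal.ofReal (y * a) := by
  rw [ENNReal.inv_div (Or.inl ENNReal.ofReal_ne_top) (Or.inl (ENNReal.ofReal_pos.2 hy).ne'),
    div_eq_mul_inv, hx, ENNReal.ofReal_mul hy.le]

lemma exists_inv_eq_ofReal_of_ofReal_lt {x : ℝ≥0∞} {p : ℝ} (hp : 0 < p)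
    (h : ENNReal.ofReal p < x) : ∃ u : ℝ, x⁻¹ = ENNReal.ofReal u ∧ 0 ≤ u ∧ p * u < 1 := by
  refine ⟨x⁻¹.toReal, (ENNReal.ofReal_toReal (ENNReal.inv_ne_top.2 (pos_of_gt h).ne')).symm,
    ENNReal.toReal_nonneg, ?_⟩
  rw [← lt_div_iff₀' hp, one_div, ← ENNReal.toReal_ofReal (inv_nonneg.2 hp.le),
    ENNReal.ofReal_inv_of_pos hp]
  exact ENNReal.toReal_strict_mono (by simpa using hp) (ENNReal.inv_lt_inv.2 h)

lemma limitedRange_exponent_relations {pm p u : ℝ} (hpm : 1 ≤ pm) (hp : pm < p)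
    (hpu : p * u < 1) :
    1 < rconj p / (1 - u)⁻¹ ∧ 1 ≤ (1 - rconj p * (1 - pm⁻¹))⁻¹ ∧
    (1 - rconj p * (1 - pm⁻¹))⁻¹ * (rconj p / (1 - u)⁻¹ - 1) * ((1 - p * u)⁻¹ * (p / pm - 1)) = 1 ∧
    rconj p * (1 - rconj p * (1 - pm⁻¹))⁻¹ * (p / pm - 1) = p := by
  have hp1 : 1 < p := hpm.trans_lt hp
  have : p - 1 ≠ 0 := by linarith
  have : pm ≠ 0 := by linarith
  have : p - pm ≠ 0 := by linarith
  have : 1 - p * u ≠ 0 := by linarith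
  have : 1 - u ≠ 0 := fun h => by nlinarith [sub_eq_zero.1 h]
  have ht : 1 - rconj p * (1 - pm⁻¹) = (p / pm - 1) / (p - 1) := by
    rw [rconj]; field_simp; ring
  have hq' : rconj p / (1 - u)⁻¹ - 1 = (1 - p * u) / (p - 1) := by
    rw [rconj]; field_simp; ring
  have hq1 : 0 < p / pm - 1 := by rw [sub_pos, one_lt_div (by linarith)]; exact hp
  refine ⟨by linarith [div_pos (sub_pos.2 hpu) (sub_pos.2 hp1)], ?_, ?_, ?_⟩
  · rw [ht, one_le_inv₀ (div_pos hq1 (by linarith)), div_le_one (by linarith)]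
    linarith [div_le_self (by linarith : 0 ≤ p) hpm]
  · rw [ht, hq']
    field_simp
  · rw [ht, rconj]
    field_simp

theorem statement5_general {n : ℕ} (pm : ℝ) (pp : ℝ≥0∞) (p : ℝ)
    (hpm : 1 ≤ pm)
    (hp₁ : pm < p) (hp₂ : ENNReal.ofReal p < pp)
    (w : (Fin n → ℝ) → ℝ≥0∞) (hw : IsWeight w) :
    ((apConst (p / pm) (fun x => w x ^ p) ≠ ∞ ∧
        rhConstE (econj (pp / ENNReal.ofReal p)) (fun x => w x ^ p) ≠ ∞) ↔
      (apConst (rconj p / (econj pp).toReal) (fun x => w x ^ (-(rconj p))) ≠ ∞ ∧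
        rhConstE (econj (econj (ENNReal.ofReal pm) / ENNReal.ofReal (rconj p)))
          (fun x => w x ^ (-(rconj p))) ≠ ∞)) ∧
    apConst (tauExp pm pp p)
        (fun x => w x ^ (p * (econj (pp / ENNReal.ofReal p)).toReal)) =
      apConst (rconj (tauExp pm pp p))
          (fun x => w x ^ (-(rconj p *
            (econj (econj (ENNReal.ofReal pm) / ENNReal.ofReal (rconj p))).toReal)))
        ^ (tauExp pm pp p - 1) := by
  have hp : 1 < p := hpm.trans_lt hp₁
  have hp0 : 0 < p := by linarith
  -- Working with `u = 1/𝔭₊` and `1/𝔭₋'` avoids case splits at `𝔭₊ = ∞` and `𝔭₋ = 1`.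
  obtain ⟨u, hu, hu0, hpu⟩ := exists_inv_eq_ofReal_of_ofReal_lt hp0 hp₂
  have hu1 : u < 1 := by nlinarith
  have hp' : 0 < rconj p := div_pos hp0 (by linarith)
  obtain ⟨hq', ht1, hrel, hexp⟩ := limitedRange_exponent_relations hpm hp₁ hpu
  have hs_eq := econj_eq_ofReal_inv_one_sub (by positivity) hpu (inv_div_ofReal hp0 hu)
  have hpp_eq := econj_eq_ofReal_inv_one_sub hu0 hu1 hu
  have ht_eq := econj_eq_ofReal_inv_one_sub
    (mul_nonneg hp'.le (sub_nonneg.2 (inv_le_one_of_one_le₀ hpm)))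
    (sub_pos.1 (inv_pos.1 (one_pos.trans_le ht1)))
    (inv_div_ofReal hp' (inv_econj_ofReal hpm))
  have hs1 : 1 ≤ (1 - p * u)⁻¹ := one_le_inv₀ (by linarith) |>.2 (by nlinarith)
  rw [tauExp, hs_eq, hpp_eq, ht_eq, ENNReal.toReal_ofReal (zero_le_one.trans hs1),
    ENNReal.toReal_ofReal (zero_le_one.trans ht1),
    ENNReal.toReal_ofReal (inv_nonneg.2 (sub_nonneg.2 hu1.le)), add_sub_cancel_right]
  exact apConst_rhConstE_duality hw ((one_lt_div (by linarith)).2 hp₁) hs1 hq' ht1 hrel hexp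

/-- Duality for limited-range weight classes: for `1 ≤ 𝔭₋ < 𝔭₊ ≤ ∞` and
`p ∈ (𝔭₋, 𝔭₊)`, with `τ_p = (𝔭₊/p)'(p/𝔭₋ - 1) + 1`, one has
`w^p ∈ A_{p/𝔭₋} ∩ RH_{(𝔭₊/p)'}` iff `w^{-p'} ∈ A_{p'/𝔭₊'} ∩ RH_{(𝔭₋'/p')'}`, and moreover
`[w^{p(𝔭₊/p)'}]_{A_{τ_p}} = [w^{-p'(𝔭₋'/p')'}]_{A_{τ_p'}}^{τ_p - 1}`. -/
theorem statement5 {n : ℕ} (pm : ℝ) (pp : ℝ≥0∞) (p : ℝ)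
    (hpm : 1 ≤ pm) (hpmpp : ENNReal.ofReal pm < pp)
    (hp₁ : pm < p) (hp₂ : ENNReal.ofReal p < pp)
    (w : (Fin n → ℝ) → ℝ≥0∞) (hw : IsWeight w) :
    ((apConst (p / pm) (fun x => w x ^ p) ≠ ∞ ∧
        rhConstE (econj (pp / ENNReal.ofReal p)) (fun x => w x ^ p) ≠ ∞) ↔
      (apConst (rconj p / (econj pp).toReal) (fun x => w x ^ (-(rconj p))) ≠ ∞ ∧
        rhConstE (econj (econj (ENNReal.ofReal pm) / ENNReal.ofReal (rconj p)))
          (fun x => w x ^ (-(rconj p))) ≠ ∞)) ∧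
    apConst (tauExp pm pp p)
        (fun x => w x ^ (p * (econj (pp / ENNReal.ofReal p)).toReal)) =
      apConst (rconj (tauExp pm pp p))
          (fun x => w x ^ (-(rconj p *
            (econj (econj (ENNReal.ofReal pm) / ENNReal.ofReal (rconj p))).toReal)))
        ^ (tauExp pm pp p - 1) :=
  statement5_general pm pp p hpm hp₁ hp₂ w hw
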